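/- arXiv:2002.10192 — 4 statements merged into one kernel-verified Lean document; each statement's English description precedes it below -/
import Mathlib

section
/- Let R be a ring. The set V(R) of all products of elements of the form (1 + rs)(1 + sr)⁻¹, where r, s ∈ R and 1 + rs is a unit, generates a subgroup of R× that contains the commutator subgroup [R×, R×]. -/
/-!
For units `a, b` put `r = a` and `s = b - a⁻¹`. Then `1 + rs = ab` and `1 + sr = ba`, so the
generator `(1 + rs)(1 + sr)⁻¹` of `V(R)` is exactly the commutator `aba⁻¹b⁻¹`.
-/

open scoped commutatorElement in
theorem commutatorElement_eq_mul_mul_inv {G : Type*} [Group G] (a b : G) :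
    ⁅a, b⁆ = a * b * (b * a)⁻¹ := by
  group

namespace Units

variable {R : Type*} [Ring R]

theorem one_add_mul_sub_inv (a b : Rˣ) : 1 + (a : R) * (b - ↑a⁻¹) = ↑(a * b) := by
  rw [mul_sub, mul_inv, val_mul]
  abel

theorem one_add_sub_inv_mul (a b : Rˣ) : 1 + ((b : R) - ↑a⁻¹) * a = ↑(b * a) := by
  rw [sub_mul, inv_mul, val_mul]
  abel

end Units

/-- The subgroup `V(R)` of `Rˣ` generated by all elements
`(1+rs)(1+sr)⁻¹` (with `r, s ∈ R` such that `1+rs` — and hence `1+sr` — is a unit)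
contains the commutator subgroup `[Rˣ, Rˣ]`. -/
theorem stmt_1 {R : Type*} [Ring R] :
    ⁅(⊤ : Subgroup Rˣ), (⊤ : Subgroup Rˣ)⁆ ≤
      Subgroup.closure {u : Rˣ | ∃ (v w : Rˣ) (r s : R),
        (v : R) = 1 + r * s ∧ (w : R) = 1 + s * r ∧ u = v * w⁻¹} := by
  rw [Subgroup.commutator_le]
  rintro a - b -
  exact Subgroup.subset_closure ⟨a * b, b * a, a, b - ↑a⁻¹,
    (Units.one_add_mul_sub_inv a b).symm, (Units.one_add_sub_inv_mul a b).symm,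
    commutatorElement_eq_mul_mul_inv a b⟩
end

section
/- Let A be a ring, κ : A → A a ring automorphism with κᴺ = id for some positive integer N. Define Υ : A_κ((τ)) → Mat(N×N, A((t))) by sending Σ aᵢτⁱ to Σ Mᵢ(aᵢ)tⁱ, where for 0 ≤ ℓ < N the matrix M_ℓ(a) has (j, j+ℓ mod N)-entries given by suitable powers κᵏ(a) as specified (namely M_ℓ(a) is the block matrix with D_{N−ℓ}(κ^{ℓ+1}(a)) in the upper-right and D_ℓ(a) in the lower-left, where D_m(a) = diag(κᵐ(a), κ^{m−1}(a), …, κ(a))). Then Υ is a ring homomorphism. -/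
/-!
Coefficientwise, `Υ(Σ aᵢτⁱ) = Σ Mᵢ(aᵢ)tⁱ`, so `Υ` is a ring homomorphism as soon as `a ↦ M_ℓ(a)`
is additive, `M₀(1) = 1` and `Mᵢ(a) Mⱼ(b) = M_{i+j}(a κⁱ(b))`, the matrix shadow of
`τⁱ b = κⁱ(b) τⁱ`. For the last identity: row `r` of `Mᵢ(a)` has its only entry `κ^{N-r}(a)` in
column `k ≡ r - i`, and `κ^{N-k} = κ^{N-r} κⁱ` because `κᴺ = id`.
-/

/-- The additive group of formal series `Σ_{i ≥ -N} aᵢτⁱ`: functions `ℤ → A`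
whose support is bounded below. -/
def lbSupport (A : Type*) [Ring A] : AddSubgroup (ℤ → A) where
  carrier := {f | ∃ N : ℤ, ∀ n < N, f n = 0}
  zero_mem' := ⟨0, fun _ _ => rfl⟩
  add_mem' := by
    rintro f g ⟨N, hN⟩ ⟨M, hM⟩
    exact ⟨min N M, fun n hn => by
      simp [Pi.add_apply, hN n (lt_of_lt_of_le hn (min_le_left N M)),
        hM n (lt_of_lt_of_le hn (min_le_right N M))]⟩
  neg_mem' := by
    rintro f ⟨N, hN⟩
    exact ⟨N, fun n hn => by simp [Pi.neg_apply, hN n hn]⟩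

theorem zpow_eq_zpow_of_intCast_eq {G : Type*} [Group G] {g : G} {N : ℕ} (hg : g ^ N = 1)
    {a b : ℤ} (h : (a : ZMod N) = b) : g ^ a = g ^ b :=
  zpow_eq_zpow_iff_modEq.mpr <| ((ZMod.intCast_eq_intCast_iff a b N).mp h).of_dvd <|
    Int.natCast_dvd_natCast.mpr (orderOf_dvd_of_pow_eq_one hg)

theorem Fin.natCast_zmod_inj {N : ℕ} {r c : Fin N} :
    ((r : ℕ) : ZMod N) = (c : ℕ) ↔ r = c := by
  rw [ZMod.natCast_eq_natCast_iff', Nat.mod_eq_of_lt r.2, Nat.mod_eq_of_lt c.2, Fin.val_inj]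

theorem lbSupport.finite_support_of_vanishing {A M : Type*} [Ring A] [Zero M]
    (f g : lbSupport A) (n : ℤ) {F : ℤ → M}
    (hF : ∀ i, (f : ℤ → A) i = 0 ∨ (g : ℤ → A) (n - i) = 0 → F i = 0) :
    F.support.Finite := by
  obtain ⟨a, ha⟩ := f.2
  obtain ⟨b, hb⟩ := g.2
  refine (Set.finite_Icc a (n - b)).subset fun i hi => ?_
  constructor <;> by_contra! h
  · exact hi (hF i (.inl (ha i h)))
  · exact hi (hF i (.inr (hb (n - i) (by omega))))

theorem lbSupport.coe_sum_apply {A ι : Type*} [Ring A] (s : Finset ι) (f : ι → lbSupport A) (n : ℤ) :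
    ((∑ k ∈ s, f k : lbSupport A) : ℤ → A) n = ∑ k ∈ s, (f k : ℤ → A) n := by
  rw [AddSubgroup.val_finsetSum, Finset.sum_apply]

section shiftMatrix

variable {A : Type*} [Ring A] (κ : RingAut A) (N : ℕ)

/-- The matrix `M_ℓ(a)` of the paper, with `ℓ` read mod `N`. -/
def shiftMatrix (ℓ : ℤ) : A →+ Matrix (Fin N) (Fin N) A where
  toFun a := Matrix.of fun r c =>
    if ((c : ℕ) : ZMod N) = ((r : ℕ) : ZMod N) - (ℓ : ZMod N) then (κ ^ (N - (r : ℕ))) a else 0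
  map_zero' := by ext; simp
  map_add' a b := by ext; simp [ite_add_zero]

theorem shiftMatrix_apply (ℓ : ℤ) (a : A) (r c : Fin N) :
    shiftMatrix κ N ℓ a r c =
      if ((c : ℕ) : ZMod N) = ((r : ℕ) : ZMod N) - (ℓ : ZMod N) then (κ ^ (N - (r : ℕ))) a
      else 0 :=
  rfl

theorem shiftMatrix_zero_one : shiftMatrix κ N 0 1 = 1 := by
  ext r c
  simp [shiftMatrix_apply, Matrix.one_apply, Fin.natCast_zmod_inj, eq_comm]

variable {κ N}

theorem shiftMatrix_mul_shiftMatrix (hκ : κ ^ N = 1) (i j : ℤ) (a b : A) :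
    shiftMatrix κ N i a * shiftMatrix κ N j b = shiftMatrix κ N (i + j) (a * (κ ^ i) b) := by
  ext r c
  have : NeZero N := ⟨r.pos.ne'⟩
  set k₀ : Fin N := ⟨(((r : ℕ) : ZMod N) - i).val, ZMod.val_lt _⟩
  have hk₀ : ((k₀ : ℕ) : ZMod N) = (r : ℕ) - i := ZMod.natCast_zmod_val _
  have hκk₀ : κ ^ (N - (k₀ : ℕ)) = κ ^ (N - (r : ℕ)) * κ ^ i := by
    rw [← zpow_natCast, ← zpow_natCast, ← zpow_add]
    apply zpow_eq_zpow_of_intCast_eq hκ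
    push_cast [Nat.cast_sub k₀.2.le, Nat.cast_sub r.2.le]
    rw [ZMod.natCast_self, hk₀]
    ring
  rw [Matrix.mul_apply, Finset.sum_eq_single k₀]
  · simp only [shiftMatrix_apply, hk₀, hκk₀, sub_sub, Int.cast_add, map_mul, RingAut.mul_apply]
    split_ifs <;> simp
  · intro k _ hk
    rw [shiftMatrix_apply, if_neg (fun h => hk (Fin.natCast_zmod_inj.mp (h.trans hk₀.symm))),
      zero_mul]
  · simp

end shiftMatrix

section upsilon

variable {A R R' : Type*} [Ring A] [Ring R] [Ring R'] {κ : RingAut A} {N : ℕ}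
  {e : R ≃+ lbSupport A} {e' : R' ≃+ lbSupport A} {U : R → Matrix (Fin N) (Fin N) R'}

theorem matrix_ext_of_coeff (e' : R' ≃+ lbSupport A) {P Q : Matrix (Fin N) (Fin N) R'}
    (h : ∀ r c n, (e' (P r c) : ℤ → A) n = (e' (Q r c) : ℤ → A) n) : P = Q :=
  Matrix.ext fun r c => e'.injective (Subtype.ext (funext (h r c)))

variable (hU : ∀ f r c i, (e' (U f r c) : ℤ → A) i = shiftMatrix κ N i ((e f : ℤ → A) i) r c)
include hU

theorem upsilon_add (x y : R) : U (x + y) = U x + U y :=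
  matrix_ext_of_coeff e' fun r c n => by
    simp only [Matrix.add_apply, map_add, hU, AddSubgroup.coe_add, Pi.add_apply]

theorem upsilon_one (hone : ∀ n : ℤ, (e 1 : ℤ → A) n = if n = 0 then 1 else 0)
    (hone' : ∀ n : ℤ, (e' 1 : ℤ → A) n = if n = 0 then 1 else 0) : U 1 = 1 :=
  matrix_ext_of_coeff e' fun r c n => by
    rw [hU, hone, Matrix.one_apply]
    by_cases hn : n = 0
    · subst hn
      rw [if_pos rfl, shiftMatrix_zero_one, Matrix.one_apply]
      split_ifs <;> simp [hone']
    · rw [if_neg hn, map_zero]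
      split_ifs <;> simp [hone', hn]

theorem upsilon_mul (hκ : κ ^ N = 1)
    (hmul : ∀ f g : R, ∀ n : ℤ,
      (e (f * g) : ℤ → A) n = ∑ᶠ i : ℤ, (e f : ℤ → A) i * (κ ^ i) ((e g : ℤ → A) (n - i)))
    (hmul' : ∀ f g : R', ∀ n : ℤ,
      (e' (f * g) : ℤ → A) n = ∑ᶠ i : ℤ, (e' f : ℤ → A) i * (e' g : ℤ → A) (n - i))
    (x y : R) : U (x * y) = U x * U y := by
  refine matrix_ext_of_coeff e' fun r c n => ?_
  set a : ℤ → A := (e x).1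
  set b : ℤ → A := (e y).1
  have hfin : (Function.support fun i => a i * (κ ^ i) (b (n - i))).Finite :=
    lbSupport.finite_support_of_vanishing (e x) (e y) n <| by rintro i (h | h) <;> simp [a, b, h]
  have hfin' (k : Fin N) : (Function.support fun i =>
      shiftMatrix κ N i (a i) r k * shiftMatrix κ N (n - i) (b (n - i)) k c).Finite :=
    lbSupport.finite_support_of_vanishing (e x) (e y) n <| by rintro i (h | h) <;> simp [a, b, h]
  calc (e' (U (x * y) r c) : ℤ → A) n
      = (Matrix.entryAddMonoidHom A r c).comp (shiftMatrix κ N n)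
          (∑ᶠ i, a i * (κ ^ i) (b (n - i))) := by
        rw [hU, hmul]; rfl
    _ = ∑ᶠ i, (shiftMatrix κ N i (a i) * shiftMatrix κ N (n - i) (b (n - i))) r c := by
        rw [map_finsum _ hfin]
        refine finsum_congr fun i => ?_
        rw [shiftMatrix_mul_shiftMatrix hκ, add_sub_cancel]
        rfl
    _ = ∑ k, ∑ᶠ i, shiftMatrix κ N i (a i) r k * shiftMatrix κ N (n - i) (b (n - i)) k c := by
        simp only [Matrix.mul_apply]
        exact finsum_sum_comm _ _ fun k _ => hfin' k
    _ = (e' ((U x * U y) r c) : ℤ → A) n := by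
        simp only [Matrix.mul_apply, map_sum, lbSupport.coe_sum_apply, hmul', hU]
        rfl

end upsilon

theorem stmt_10_general {A R R' : Type*} [Ring A] [Ring R] [Ring R'] (κ : RingAut A)
    (N : ℕ) (hκ : κ ^ N = 1)
    (e : R ≃+ lbSupport A)
    (hone : ∀ n : ℤ, (e 1).1 n = if n = 0 then 1 else 0)
    (hmul : ∀ f g : R, ∀ n : ℤ,
      (e (f * g)).1 n = ∑ᶠ i : ℤ, (e f).1 i * (κ ^ i) ((e g).1 (n - i)))
    (e' : R' ≃+ lbSupport A)
    (hone' : ∀ n : ℤ, (e' 1).1 n = if n = 0 then 1 else 0)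
    (hmul' : ∀ f g : R', ∀ n : ℤ,
      (e' (f * g)).1 n = ∑ᶠ i : ℤ, (e' f).1 i * (e' g).1 (n - i))
    (U : R → Matrix (Fin N) (Fin N) R')
    (hU : ∀ (f : R) (r c : Fin N) (i : ℤ),
      (e' (U f r c)).1 i =
        if ((c : ℕ) : ZMod N) = ((r : ℕ) : ZMod N) - (i : ZMod N) then
          (κ ^ (N - (r : ℕ))) ((e f).1 i)
        else 0) :
    (∀ x y : R, U (x + y) = U x + U y) ∧
    (∀ x y : R, U (x * y) = U x * U y) ∧
    U 1 = 1 :=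
  ⟨upsilon_add hU, upsilon_mul hU hκ hmul hmul', upsilon_one hU hone hone'⟩

/-- Let `κ` be a ring automorphism of `A` with `κᴺ = id` (`N > 0`).
Let `R` be the twisted Laurent series ring `A_κ((τ))` and `R'` the untwisted
Laurent series ring `A((t))` (both encoded abstractly via additive equivalences
`e`, `e'` onto bounded-below coefficient sequences with the corresponding
convolution products).  Define `Υ : R → Mat(N×N, A((t)))` by sending
`Σ aᵢτⁱ` to `Σ Mᵢ(aᵢ)tⁱ`, where `M_ℓ(a)` is the permutation-like matrix whose
`(r, c)`-entry is `κ^{N−r}(a)` when `c ≡ r − ℓ (mod N)` and `0` otherwise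
(i.e. the block matrix with the diagonal blocks `D_m(a) = diag(κᵐ(a), …, κ(a))`
placed in the upper-right and lower-left corners, as in the paper's Example for
`N = 3`).  Then `Υ` is a ring homomorphism. -/
theorem stmt_10 {A R R' : Type*} [Ring A] [Ring R] [Ring R'] (κ : RingAut A)
    (N : ℕ) (hNpos : 0 < N) (hκ : κ ^ N = 1)
    (e : R ≃+ lbSupport A)
    (hone : ∀ n : ℤ, (e 1).1 n = if n = 0 then 1 else 0)
    (hmul : ∀ f g : R, ∀ n : ℤ,
      (e (f * g)).1 n = ∑ᶠ i : ℤ, (e f).1 i * (κ ^ i) ((e g).1 (n - i)))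
    (e' : R' ≃+ lbSupport A)
    (hone' : ∀ n : ℤ, (e' 1).1 n = if n = 0 then 1 else 0)
    (hmul' : ∀ f g : R', ∀ n : ℤ,
      (e' (f * g)).1 n = ∑ᶠ i : ℤ, (e' f).1 i * (e' g).1 (n - i))
    (U : R → Matrix (Fin N) (Fin N) R')
    (hU : ∀ (f : R) (r c : Fin N) (i : ℤ),
      (e' (U f r c)).1 i =
        if ((c : ℕ) : ZMod N) = ((r : ℕ) : ZMod N) - (i : ZMod N) then
          (κ ^ (N - (r : ℕ))) ((e f).1 i)
        else 0) :
    (∀ x y : R, U (x + y) = U x + U y) ∧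
    (∀ x y : R, U (x * y) = U x * U y) ∧
    U 1 = 1 :=
  stmt_10_general κ N hκ e hone hmul e' hone' hmul' U hU
end

section
/- Let A be a ring containing ℚ and κ an automorphism of A. The logarithm log(1 + μ) = Σ_{n≥1} (−1)^{n−1} μⁿ/n, for μ ∈ τ·A_κ[[τ]], is well-defined as a map from W(A, κ) to the completed quotient P̄ = ∏_{n≥0} Pₙ/Pₙ', and descends to a group homomorphism Log : W(A,κ)/N → P̄ where the multiplicative structure on the source maps to the additive structure on the target: for u, v ∈ W(A, κ), log(uv) ≡ log(u) + log(v) in P̄. -/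
/-!
Let `D = τ d/dτ` be the Euler operator, a derivation of `A_κ[[τ]]`, and let `T` send a series to
the class of its `τⁿ`-coefficient in `Pₙ/Pₙ'`. Then `T` is a trace, `T (x y) = T (y x)`, and
`T (D x) = n T x`. Hence `T (D (x ^ (k + 1))) = (k + 1) T (D x * x ^ k)`, and summing the log series
termwise gives `n log f ≡ T (D f * f⁻¹)`: the logarithmic derivative. Since
`D (u v) (u v)⁻¹ = D u u⁻¹ + u (D v v⁻¹) u⁻¹` and `T` is invariant under conjugation, the
logarithmic derivative is additive under `T`; dividing by `n` uses `ℚ ⊆ A`.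
-/

open Finset

section Trace

variable {S M : Type*} [Ring S] [AddCommGroup M]

theorem map_pow_succ_of_leibniz {D : S → S} (hD : ∀ x y, D (x * y) = D x * y + x * D y)
    (x : S) (k : ℕ) : D (x ^ (k + 1)) = ∑ i ∈ range (k + 1), x ^ i * D x * x ^ (k - i) := by
  induction k with
  | zero => simp
  | succ k ih =>
    rw [pow_succ, hD, ih, sum_range_succ _ (k + 1), sum_mul]
    congr 1
    · refine sum_congr rfl fun i hi => ?_
      rw [mul_assoc _ (x ^ (k - i)), ← pow_succ, Nat.sub_add_comm (mem_range_succ_iff.mp hi)]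
    · simp

variable {T : S →+ M}

theorem trace_map_pow_succ_of_leibniz (hT : ∀ x y, T (x * y) = T (y * x)) {D : S → S}
    (hD : ∀ x y, D (x * y) = D x * y + x * D y) (x : S) (k : ℕ) :
    T (D (x ^ (k + 1))) = (k + 1) • T (D x * x ^ k) := by
  rw [map_pow_succ_of_leibniz hD, map_sum, sum_congr rfl (g := fun _ => T (D x * x ^ k)),
    sum_const, card_range]
  intro i hi
  rw [mul_assoc, hT, mul_assoc, ← pow_add, Nat.sub_add_cancel (mem_range_succ_iff.mp hi)]

theorem trace_mul_units_inv (hT : ∀ x y, T (x * y) = T (y * x)) (u v : Sˣ) (du dv : S) :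
    T ((du * v + u * dv) * ↑(u * v)⁻¹) = T (du * ↑u⁻¹) + T (dv * ↑v⁻¹) := by
  have hconj : T (u * (dv * ↑v⁻¹ * ↑u⁻¹)) = T (dv * ↑v⁻¹) := by
    rw [hT, mul_assoc, Units.inv_mul, mul_one]
  rw [mul_inv_rev, Units.val_mul, add_mul, map_add, ← hconj]
  simp only [mul_assoc, Units.mul_inv_cancel_left]

end Trace

section TwistedPowerSeries

variable {A R : Type*} [Ring A] [Ring R] (κ : RingAut A) (e : R ≃+ (ℕ → A))

/-- Multiplication in `R` is that of `A_κ[[τ]]`, where `τ a = κ a τ`. -/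
def IsTwistedMul : Prop :=
  ∀ f g : R, ∀ n : ℕ,
    e (f * g) n = ∑ p ∈ Finset.HasAntidiagonal.antidiagonal n, e f p.1 * (κ ^ p.1) (e g p.2)

def orderFiltration (k : ℕ) : AddSubgroup R where
  carrier := {x | ∀ m < k, e x m = 0}
  add_mem' hx hy m hm := by simp [hx m hm, hy m hm]
  zero_mem' _ _ := by simp
  neg_mem' hx m hm := by simp [hx m hm]

/-- `τ d/dτ` -/
def eulerOp (x : R) : R :=
  e.symm fun m => m • e x m

variable {κ e}

theorem orderFiltration_zero : orderFiltration e 0 = ⊤ :=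
  eq_top_iff.mpr fun _ _ _ h => absurd h (Nat.not_lt_zero _)

theorem orderFiltration_antitone : Antitone (orderFiltration e) :=
  fun _ _ hjk _ hx m hm => hx m (hm.trans_le hjk)

theorem mul_mem_orderFiltration (hmul : IsTwistedMul κ e) {j k : ℕ} {x y : R}
    (hx : x ∈ orderFiltration e j) (hy : y ∈ orderFiltration e k) :
    x * y ∈ orderFiltration e (j + k) := by
  intro m hm
  rw [hmul]
  refine sum_eq_zero fun p hp => ?_
  rw [HasAntidiagonal.mem_antidiagonal] at hp
  by_cases h : p.1 < j
  · rw [hx _ h, zero_mul]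
  · rw [hy p.2 (by omega), map_zero, mul_zero]

theorem mul_mem_orderFiltration_left (hmul : IsTwistedMul κ e) {k : ℕ} (x : R) {y : R}
    (hy : y ∈ orderFiltration e k) : x * y ∈ orderFiltration e k := by
  simpa using mul_mem_orderFiltration hmul (orderFiltration_zero.ge (AddSubgroup.mem_top x)) hy

theorem mul_mem_orderFiltration_right (hmul : IsTwistedMul κ e) {k : ℕ} {x : R}
    (hx : x ∈ orderFiltration e k) (y : R) : x * y ∈ orderFiltration e k := by
  simpa using mul_mem_orderFiltration hmul hx (orderFiltration_zero.ge (AddSubgroup.mem_top y))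

theorem pow_mem_orderFiltration (hmul : IsTwistedMul κ e) {x : R}
    (hx : x ∈ orderFiltration e 1) (k : ℕ) : x ^ k ∈ orderFiltration e k := by
  induction k with
  | zero => simp [orderFiltration_zero]
  | succ k ih => rw [pow_succ]; exact mul_mem_orderFiltration hmul ih hx

theorem coeff_zero_mul (hmul : IsTwistedMul κ e) (f g : R) : e (f * g) 0 = e f 0 * e g 0 := by
  rw [hmul]; simp

theorem one_sub_mem_orderFiltration (hone : ∀ n : ℕ, e 1 n = if n = 0 then 1 else 0) {f : R}
    (hf : e f 0 = 1) : 1 - f ∈ orderFiltration e 1 := by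
  intro m hm
  obtain rfl : m = 0 := Nat.lt_one_iff.mp hm
  simp [hone, hf]

theorem geom_sum_mul_one_sub_sub (f : R) (n : ℕ) :
    (∑ i ∈ range n, (1 - f) ^ i) * f = 1 - (1 - f) ^ n := by
  simpa using geom_sum_mul_neg (1 - f) n

theorem mul_geom_sum_one_sub (f : R) (n : ℕ) :
    f * ∑ i ∈ range n, (1 - f) ^ i = 1 - (1 - f) ^ n := by
  simpa using mul_neg_geom_sum (1 - f) n

theorem sub_geom_sum_mem_orderFiltration (hmul : IsTwistedMul κ e)
    (hone : ∀ n : ℕ, e 1 n = if n = 0 then 1 else 0) {f g : R} (hf : e f 0 = 1) (hfg : f * g = 1)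
    (n : ℕ) : g - ∑ i ∈ range n, (1 - f) ^ i ∈ orderFiltration e n := by
  have hg : g - ∑ i ∈ range n, (1 - f) ^ i = (1 - f) ^ n * g := by
    calc g - ∑ i ∈ range n, (1 - f) ^ i = g - (∑ i ∈ range n, (1 - f) ^ i) * (f * g) := by
          rw [hfg, mul_one]
      _ = (1 - (∑ i ∈ range n, (1 - f) ^ i) * f) * g := by rw [sub_mul, one_mul, mul_assoc]
      _ = (1 - f) ^ n * g := by rw [geom_sum_mul_one_sub_sub, sub_sub_cancel]
  rw [hg]
  exact mul_mem_orderFiltration_right hmul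
    (pow_mem_orderFiltration hmul (one_sub_mem_orderFiltration hone hf) n) g

theorem geom_sum_sub_geom_sum_mem_orderFiltration (hmul : IsTwistedMul κ e)
    (hone : ∀ n : ℕ, e 1 n = if n = 0 then 1 else 0) {f : R} (hf : e f 0 = 1) {m n : ℕ}
    (hmn : m ≤ n) :
    ∑ i ∈ range n, (1 - f) ^ i - ∑ i ∈ range m, (1 - f) ^ i ∈ orderFiltration e m := by
  rw [← sum_range_add_sum_Ico _ hmn, add_sub_cancel_left]
  refine AddSubgroup.sum_mem _ fun i hi => ?_
  exact orderFiltration_antitone (mem_Ico.mp hi).1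
    (pow_mem_orderFiltration hmul (one_sub_mem_orderFiltration hone hf) i)

theorem isUnit_of_coeff_zero_eq_one (hmul : IsTwistedMul κ e)
    (hone : ∀ n : ℕ, e 1 n = if n = 0 then 1 else 0) {f : R} (hf : e f 0 = 1) : IsUnit f := by
  set G : ℕ → R := fun n => ∑ i ∈ range n, (1 - f) ^ i
  -- `g = ∑ (1 - f) ^ i`, which converges since `1 - f` has positive order
  let g : R := e.symm fun m => e (G (m + 1)) m
  have hgG (m : ℕ) : g - G (m + 1) ∈ orderFiltration e (m + 1) := by
    intro k hk
    have hG := geom_sum_sub_geom_sum_mem_orderFiltration hmul hone hf hk k (Nat.lt_succ_self k)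
    simp only [map_sub, Pi.sub_apply, g, AddEquiv.apply_symm_apply] at hG ⊢
    exact sub_eq_zero.mpr (sub_eq_zero.mp hG).symm
  have hpow (m : ℕ) : e ((1 - f) ^ (m + 1)) m = 0 :=
    pow_mem_orderFiltration hmul (one_sub_mem_orderFiltration hone hf) (m + 1) m m.lt_succ_self
  refine ⟨⟨f, g, e.injective (funext fun m => ?_), e.injective (funext fun m => ?_)⟩, rfl⟩
  · have h := mul_mem_orderFiltration_left hmul f (hgG m) m m.lt_succ_self
    rw [mul_sub, map_sub, Pi.sub_apply, sub_eq_zero, mul_geom_sum_one_sub, map_sub, Pi.sub_apply,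
      hpow, sub_zero] at h
    exact h
  · have h := mul_mem_orderFiltration_right hmul (hgG m) f m m.lt_succ_self
    rw [sub_mul, map_sub, Pi.sub_apply, sub_eq_zero, geom_sum_mul_one_sub_sub, map_sub,
      Pi.sub_apply, hpow, sub_zero] at h
    exact h

theorem coeff_eulerOp (x : R) (m : ℕ) : e (eulerOp e x) m = m • e x m := by
  simp [eulerOp]

theorem eulerOp_mem_orderFiltration (x : R) : eulerOp e x ∈ orderFiltration e 1 := by
  intro m hm
  simp [coeff_eulerOp, Nat.lt_one_iff.mp hm]

theorem eulerOp_sub (x y : R) : eulerOp e (x - y) = eulerOp e x - eulerOp e y :=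
  e.injective <| funext fun m => by simp [coeff_eulerOp, smul_sub]

theorem eulerOp_mul (hmul : IsTwistedMul κ e) (x y : R) :
    eulerOp e (x * y) = eulerOp e x * y + x * eulerOp e y := by
  refine e.injective (funext fun m => ?_)
  rw [coeff_eulerOp, map_add, Pi.add_apply, hmul, hmul, hmul, smul_sum, ← sum_add_distrib]
  refine sum_congr rfl fun p hp => ?_
  rw [← HasAntidiagonal.mem_antidiagonal.mp hp, add_smul, coeff_eulerOp, coeff_eulerOp, map_nsmul,
    smul_mul_assoc, mul_smul_comm]

theorem eulerOp_one (hmul : IsTwistedMul κ e) : eulerOp e (1 : R) = 0 := by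
  simpa using eulerOp_mul hmul (1 : R) 1

variable [Algebra ℚ A]

variable (κ) in
/-- `Pₙ'`, transported to `A` along `a ↦ a τⁿ`. -/
def commutatorSubmodule (n : ℕ) : Submodule ℚ A where
  toAddSubmonoid := (AddSubgroup.closure
    {z : A | ∃ (x y : A) (k : ℕ), k ≤ n ∧ z = x * (κ ^ k) y - y * (κ ^ (n - k)) x}).toAddSubmonoid
  smul_mem' q z hz := by
    change z ∈ AddSubgroup.closure _ at hz
    change q • z ∈ AddSubgroup.closure _
    induction hz using AddSubgroup.closure_induction with
    | mem w hw =>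
      obtain ⟨x, y, k, hk, rfl⟩ := hw
      refine AddSubgroup.subset_closure ⟨q • x, y, k, hk, ?_⟩
      rw [map_rat_smul, smul_sub, smul_mul_assoc, mul_smul_comm]
    | zero => simp
    | add x y _ _ hx hy => simpa [smul_add] using add_mem hx hy
    | neg x _ hx => simpa [smul_neg] using neg_mem hx

variable (κ e) in
def traceCoeff (n : ℕ) : R →+ A ⧸ commutatorSubmodule κ n :=
  (commutatorSubmodule κ n).mkQ.toAddMonoidHom.comp
    ((Pi.evalAddMonoidHom (fun _ => A) n).comp e.toAddMonoidHom)

theorem traceCoeff_apply (n : ℕ) (x : R) :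
    traceCoeff κ e n x = Submodule.Quotient.mk (e x n) :=
  rfl

theorem traceCoeff_mul_comm (hmul : IsTwistedMul κ e) (n : ℕ) (x y : R) :
    traceCoeff κ e n (x * y) = traceCoeff κ e n (y * x) := by
  rw [traceCoeff_apply, traceCoeff_apply, Submodule.Quotient.eq, hmul, hmul,
    Nat.sum_antidiagonal_eq_sum_range_succ_mk, Nat.sum_antidiagonal_eq_sum_range_succ_mk,
    ← sum_range_reflect (fun i => e y i * (κ ^ i) (e x (n - i))), ← sum_sub_distrib]
  refine sum_mem fun i hi => AddSubgroup.subset_closure ⟨e x i, e y (n - i), i,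
    mem_range_succ_iff.mp hi, ?_⟩
  have hi' : i ≤ n := mem_range_succ_iff.mp hi
  rw [Nat.succ_sub_one, Nat.sub_sub_self hi']

theorem traceCoeff_eulerOp (n : ℕ) (x : R) :
    traceCoeff κ e n (eulerOp e x) = n • traceCoeff κ e n x := by
  rw [traceCoeff_apply, traceCoeff_apply, coeff_eulerOp, Submodule.Quotient.mk_smul]

theorem traceCoeff_eq_zero_of_mem {n : ℕ} {x : R} (hx : x ∈ orderFiltration e (n + 1)) :
    traceCoeff κ e n x = 0 := by
  rw [traceCoeff_apply, hx n n.lt_succ_self, Submodule.Quotient.mk_zero]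

theorem traceCoeff_eulerOp_mul_eq_sum (hmul : IsTwistedMul κ e)
    (hone : ∀ n : ℕ, e 1 n = if n = 0 then 1 else 0) {f g : R} (hf : e f 0 = 1) (hfg : f * g = 1)
    (n : ℕ) : traceCoeff κ e n (eulerOp e f * g) =
      ∑ k ∈ range n, traceCoeff κ e n (eulerOp e f * (1 - f) ^ k) := by
  have hg := traceCoeff_eq_zero_of_mem (κ := κ) <| mul_mem_orderFiltration_left hmul
    (eulerOp e f) (sub_geom_sum_mem_orderFiltration hmul hone hf hfg (n + 1))
  have hlast : traceCoeff κ e n (eulerOp e f * (1 - f) ^ n) = 0 := by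
    refine traceCoeff_eq_zero_of_mem ?_
    rw [add_comm]
    exact mul_mem_orderFiltration hmul (eulerOp_mem_orderFiltration f)
      (pow_mem_orderFiltration hmul (one_sub_mem_orderFiltration hone hf) n)
  rw [mul_sub, map_sub, sub_eq_zero] at hg
  rw [hg, mul_sum, map_sum, sum_range_succ, hlast, add_zero]

variable (e) in
/-- The `τⁿ`-coefficient of `log f`. The `k = 0` term vanishes because `(0 : ℚ)⁻¹ = 0`; the terms
with `n < k` are omitted because `(f - 1) ^ k` has order at least `k`. -/
def logSeriesCoeff (f : R) (n : ℕ) : A :=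
  ∑ k ∈ range (n + 1), ((-1 : ℚ) ^ (k + 1) / k) • e ((f - 1) ^ k) n

theorem smul_logSeriesCoeff (hmul : IsTwistedMul κ e) (f : R) (n : ℕ) :
    (n : ℚ) • (Submodule.Quotient.mk (logSeriesCoeff e f n) : A ⧸ commutatorSubmodule κ n) =
      ∑ k ∈ range n, traceCoeff κ e n (eulerOp e f * (1 - f) ^ k) := by
  have hT := traceCoeff_mul_comm hmul n
  calc (n : ℚ) • (Submodule.Quotient.mk (logSeriesCoeff e f n) : A ⧸ commutatorSubmodule κ n)
      = ∑ k ∈ range (n + 1),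
          ((-1 : ℚ) ^ (k + 1) / k) • traceCoeff κ e n (eulerOp e ((f - 1) ^ k)) := by
        rw [logSeriesCoeff, ← Submodule.mkQ_apply, map_sum, smul_sum]
        refine sum_congr rfl fun k _ => ?_
        rw [map_smul, smul_comm, Submodule.mkQ_apply, ← traceCoeff_apply, traceCoeff_eulerOp,
          Nat.cast_smul_eq_nsmul]
    _ = ∑ k ∈ range n,
          ((-1 : ℚ) ^ (k + 2) / (k + 1 : ℕ)) •
            traceCoeff κ e n (eulerOp e ((f - 1) ^ (k + 1))) := by
        simp [sum_range_succ' _ n]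
    _ = ∑ k ∈ range n, traceCoeff κ e n (eulerOp e f * (1 - f) ^ k) := by
        refine sum_congr rfl fun k _ => ?_
        rw [trace_map_pow_succ_of_leibniz hT (eulerOp_mul hmul), eulerOp_sub, eulerOp_one hmul,
          sub_zero, ← Nat.cast_smul_eq_nsmul ℚ, smul_smul]
        have hk : ((-1 : ℚ) ^ (k + 2) / ((k : ℚ) + 1)) * ((k : ℚ) + 1) = (-1) ^ k := by
          field_simp
          ring
        push_cast
        rw [hk, ← neg_sub f 1]
        rcases Nat.even_or_odd k with h | h
        · rw [h.neg_one_pow, h.neg_pow, one_smul]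
        · rw [h.neg_one_pow, h.neg_pow, mul_neg, map_neg, neg_one_smul]

end TwistedPowerSeries

/-- Let `A` be a ring containing ℚ and `κ` an automorphism of `A`.
Work in the twisted power series ring `A_κ[[τ]]` (encoded abstractly via
`e : R ≃+ (ℕ → A)` with twisted-convolution multiplication).  For
`f ∈ W(A, κ) = 1 + τ·A_κ[[τ]]` the `τⁿ`-coefficient of
`log f = Σ_{k≥1} (−1)^{k−1}(f−1)ᵏ/k` is the finite sum
`Σ_{k=1}^{n} ((−1)^{k+1}/k)·coeffₙ((f−1)ᵏ)`.  Let `Pₙ'` be the additive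
subgroup of `A` (the coefficient copy of `Pₙ = Aτⁿ`) generated by the
commutators `x·κᵏ(y) − y·κ^{n−k}(x)` (corresponding to `xy − yx` with
`x ∈ Pₖ`, `y ∈ P_{n−k}`).  Then `log` is additive modulo these commutator
subgroups: for `u, v ∈ W(A, κ)`,
`logₙ(uv) ≡ logₙ(u) + logₙ(v)` in `P̄ₙ = Pₙ/Pₙ'` for every `n`, i.e. `Log`
descends to a group homomorphism `W(A,κ) → P̄ = ∏ₙ Pₙ/Pₙ'`. -/
theorem stmt_12 {A R : Type*} [Ring A] [Algebra ℚ A] [Ring R] (κ : RingAut A)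
    (e : R ≃+ (ℕ → A))
    (hone : ∀ n : ℕ, e 1 n = if n = 0 then 1 else 0)
    (hmul : ∀ f g : R, ∀ n : ℕ,
      e (f * g) n = ∑ p ∈ Finset.HasAntidiagonal.antidiagonal n, e f p.1 * (κ ^ p.1) (e g p.2))
    (logCoeff : R → ℕ → A)
    (hlog : ∀ (f : R) (n : ℕ),
      logCoeff f n = ∑ k ∈ Finset.range (n + 1), ((-1 : ℚ) ^ (k + 1) / k) • e ((f - 1) ^ k) n)
    (u v : R) (hu : e u 0 = 1) (hv : e v 0 = 1) (n : ℕ) :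
    logCoeff (u * v) n - logCoeff u n - logCoeff v n ∈
      AddSubgroup.closure {z : A | ∃ (x y : A) (k : ℕ), k ≤ n ∧
        z = x * (κ ^ k) y - y * (κ ^ (n - k)) x} := by
  obtain rfl : logCoeff = logSeriesCoeff e := funext₂ hlog
  change _ ∈ commutatorSubmodule κ n
  rw [← Submodule.Quotient.mk_eq_zero]
  rcases Nat.eq_zero_or_pos n with rfl | hn
  · simp [logSeriesCoeff]
  obtain ⟨U, rfl⟩ := isUnit_of_coeff_zero_eq_one hmul hone hu
  obtain ⟨V, rfl⟩ := isUnit_of_coeff_zero_eq_one hmul hone hv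
  have huv : e ↑(U * V) 0 = 1 := by rw [Units.val_mul, coeff_zero_mul hmul, hu, hv, one_mul]
  have hlogDeriv (W : Rˣ) (hW : e W 0 = 1) :
      (n : ℚ) • (Submodule.Quotient.mk (logSeriesCoeff e W n) : A ⧸ commutatorSubmodule κ n) =
        traceCoeff κ e n (eulerOp e W * ↑W⁻¹) := by
    rw [smul_logSeriesCoeff hmul, traceCoeff_eulerOp_mul_eq_sum hmul hone hW W.mul_inv]
  refine smul_right_injective _ (Nat.cast_ne_zero.mpr hn.ne' : (n : ℚ) ≠ 0) ?_
  simp only [Submodule.Quotient.mk_sub, smul_sub, smul_zero]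
  rw [← Units.val_mul, hlogDeriv _ huv, hlogDeriv _ hu, hlogDeriv _ hv, Units.val_mul,
    eulerOp_mul hmul, trace_mul_units_inv (traceCoeff_mul_comm hmul n), sub_sub, sub_self]
end

section
/- Let F be a free group on x₁, …, xₙ, and suppose elements y₁, …, yₙ ∈ F form a basis of the subgroup they generate, with each xᵢ expressible in terms of y's via an automorphism of F sending xᵢ to yᵢ. Then the Fox Jacobian matrix (∂yⱼ/∂xᵢ) over ℤ[F] is invertible over ℤ[F], with inverse given by the image of the Jacobian (∂xⱼ/∂yᵢ) of the inverse automorphism. -/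
/-!
Restricted to group elements, each Fox derivative `∂/∂xᵢ` is a crossed homomorphism
`F → ℤ[F]`. Every crossed homomorphism `E` (for `F` acting through a ring map `f`) satisfies
Fox's fundamental formula `E w = ∑ₖ f (∂w/∂xₖ) * E xₖ`, by induction on `w`. Applied to
`w ↦ ∂(φ w)/∂xᵢ` it is the chain rule `J(φ ∘ ψ) = φ̂(J ψ) * J φ` for the Jacobians `J`, and
`J id = 1`. Hence `λ̂(J λ⁻¹) * J λ = 1`, and the same identity for `λ⁻¹`, pushed through `λ̂`,
gives `J λ * λ̂(J λ⁻¹) = 1`; both sides are needed since `ℤ[F]` is not commutative.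
-/

/-- The canonical inclusion of a free group into its integral group ring. -/
noncomputable def fgOf (n : ℕ) : FreeGroup (Fin n) →* MonoidAlgebra ℤ (FreeGroup (Fin n)) :=
  MonoidAlgebra.of ℤ (FreeGroup (Fin n))

open MonoidAlgebra

section CrossedHom

variable {R G S : Type*} [Ring R] [Group G] [Ring S]

def IsCrossedHom (f : MonoidAlgebra R G →+* S) (E : G → S) : Prop :=
  ∀ g h, E (g * h) = E g + f (of R G g) * E h

namespace IsCrossedHom

variable {f : MonoidAlgebra R G →+* S} {E : G → S}

lemma apply_one (hE : IsCrossedHom f E) : E 1 = 0 := by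
  have h := hE 1 1
  rw [mul_one, _root_.map_one, _root_.map_one, one_mul] at h
  exact add_eq_right.mp h.symm

lemma apply_inv (hE : IsCrossedHom f E) (g : G) : E g⁻¹ = -(f (of R G g⁻¹) * E g) := by
  have h := hE g⁻¹ g
  rw [inv_mul_cancel, hE.apply_one] at h
  exact eq_neg_of_add_eq_zero_left h.symm

lemma comp_monoidHom {H : Type*} [Group H] {D : H → MonoidAlgebra R H}
    (hD : IsCrossedHom (RingHom.id _) D) (φ : G →* H) :
    IsCrossedHom (mapDomainRingHom R φ) (D ∘ φ) := by
  intro g h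
  simp only [Function.comp_apply, map_mul, hD (φ g) (φ h), RingHom.id_apply, of_apply,
    mapDomainRingHom_apply, mapDomain_single]

end IsCrossedHom

end CrossedHom

section Fox

variable {R ι : Type*} [Ring R] [DecidableEq ι]

/-- `d i` is the Fox derivative `∂/∂xᵢ` restricted to `F ⊆ R[F]`: these two properties
determine it. -/
structure IsFoxDerivatives (d : ι → FreeGroup ι → MonoidAlgebra R (FreeGroup ι)) : Prop where
  isCrossedHom : ∀ i, IsCrossedHom (RingHom.id _) (d i)
  apply_of : ∀ i j, d i (FreeGroup.of j) = if j = i then 1 else 0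

variable {d : ι → FreeGroup ι → MonoidAlgebra R (FreeGroup ι)}

lemma IsCrossedHom.eq_sum_foxDerivatives [Fintype ι] {S : Type*} [Ring S]
    {f : MonoidAlgebra R (FreeGroup ι) →+* S} {E : FreeGroup ι → S} (hE : IsCrossedHom f E)
    (hd : IsFoxDerivatives d) (w : FreeGroup ι) :
    E w = ∑ k, f (d k w) * E (FreeGroup.of k) := by
  induction w using FreeGroup.induction_on with
  | C1 => simp [hE.apply_one, (hd.isCrossedHom _).apply_one]
  | of x => simp [hd.apply_of]
  | inv_of x ih =>
    simp only [hE.apply_inv, ih, (hd.isCrossedHom _).apply_inv, Finset.mul_sum, RingHom.id_apply,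
      map_neg, map_mul, neg_mul, mul_assoc, Finset.sum_neg_distrib]
  | mul x y ihx ihy =>
    simp only [hE x y, ihx, ihy, (hd.isCrossedHom _) x y, RingHom.id_apply, map_add, map_mul,
      add_mul, mul_assoc, Finset.sum_add_distrib, Finset.mul_sum]

lemma IsFoxDerivatives.apply_map [Fintype ι] (hd : IsFoxDerivatives d)
    (φ : FreeGroup ι →* FreeGroup ι) (i : ι) (w : FreeGroup ι) :
    d i (φ w) = ∑ k, mapDomainRingHom R φ (d k w) * d i (φ (FreeGroup.of k)) :=
  ((hd.isCrossedHom i).comp_monoidHom φ).eq_sum_foxDerivatives hd w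

def foxJacobian (d : ι → FreeGroup ι → MonoidAlgebra R (FreeGroup ι))
    (φ : FreeGroup ι →* FreeGroup ι) : Matrix ι ι (MonoidAlgebra R (FreeGroup ι)) :=
  Matrix.of fun k i => d i (φ (FreeGroup.of k))

namespace IsFoxDerivatives

lemma foxJacobian_id (hd : IsFoxDerivatives d) : foxJacobian d (MonoidHom.id _) = 1 := by
  ext k i
  simp [foxJacobian, hd.apply_of, Matrix.one_apply]

lemma foxJacobian_comp [Fintype ι] (hd : IsFoxDerivatives d)
    (φ ψ : FreeGroup ι →* FreeGroup ι) :
    foxJacobian d (φ.comp ψ) =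
      (foxJacobian d ψ).map (mapDomainRingHom R φ) * foxJacobian d φ :=
  Matrix.ext fun k i => hd.apply_map φ i (ψ (FreeGroup.of k))

lemma map_symm_mul_foxJacobian [Fintype ι] (hd : IsFoxDerivatives d)
    (e : FreeGroup ι ≃* FreeGroup ι) :
    (foxJacobian d e.symm.toMonoidHom).map (mapDomainRingHom R e.toMonoidHom) *
      foxJacobian d e.toMonoidHom = 1 := by
  rw [← hd.foxJacobian_comp, ← hd.foxJacobian_id]
  congr 1
  exact MonoidHom.ext e.apply_symm_apply

lemma foxJacobian_mul_map_symm [Fintype ι] (hd : IsFoxDerivatives d)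
    (e : FreeGroup ι ≃* FreeGroup ι) :
    foxJacobian d e.toMonoidHom *
      (foxJacobian d e.symm.toMonoidHom).map (mapDomainRingHom R e.toMonoidHom) = 1 := by
  have hcomp : mapDomainRingHom R e.toMonoidHom ∘ mapDomainRingHom R e.symm.toMonoidHom = id :=
    funext (mapDomainRingEquiv R e).apply_symm_apply
  have h := congrArg (mapDomainRingHom R e.toMonoidHom).mapMatrix
    (hd.map_symm_mul_foxJacobian e.symm)
  rwa [map_mul, map_one, RingHom.mapMatrix_apply, RingHom.mapMatrix_apply, Matrix.map_map, hcomp,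
    Matrix.map_id, MulEquiv.symm_symm] at h

end IsFoxDerivatives

end Fox

/-- Let `F` be the free group on `x₁,…,xₙ` with Fox derivatives
`∂/∂xᵢ` on `ℤ[F]`, and let `y₁,…,yₙ` be a basis of the subgroup they generate,
given as `yᵢ = λ(xᵢ)` for an automorphism `λ` of `F`.  Then the Fox Jacobian
matrix `M = (∂yⱼ/∂xᵢ)` is invertible over `ℤ[F]`, with inverse the image under
`λ̂ : ℤ[F] → ℤ[F]` of the Jacobian of the inverse automorphism
(`M⁻¹ = (λ̂(∂(λ⁻¹xⱼ)/∂xᵢ))`, suitably indexed). -/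
theorem stmt_18 {n : ℕ}
    (d : Fin n → (MonoidAlgebra ℤ (FreeGroup (Fin n)) →ₗ[ℤ] MonoidAlgebra ℤ (FreeGroup (Fin n))))
    (hbasis : ∀ i j : Fin n, d i (fgOf n (FreeGroup.of j)) = if j = i then 1 else 0)
    (hprod : ∀ i : Fin n, ∀ h k : FreeGroup (Fin n),
      d i (fgOf n (h * k)) = d i (fgOf n h) + fgOf n h * d i (fgOf n k))
    (lam : FreeGroup (Fin n) ≃* FreeGroup (Fin n)) :
    IsUnit (Matrix.of fun k i : Fin n => d i (fgOf n (lam (FreeGroup.of k)))) ∧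
    (Matrix.of fun k i : Fin n => d i (fgOf n (lam (FreeGroup.of k)))) *
      (Matrix.of fun j k : Fin n =>
        MonoidAlgebra.mapDomainRingHom ℤ lam.toMonoidHom
          (d k (fgOf n (lam.symm (FreeGroup.of j))))) = 1 ∧
    (Matrix.of fun j k : Fin n =>
        MonoidAlgebra.mapDomainRingHom ℤ lam.toMonoidHom
          (d k (fgOf n (lam.symm (FreeGroup.of j))))) *
      (Matrix.of fun k i : Fin n => d i (fgOf n (lam (FreeGroup.of k)))) = 1 := by
  have hd : IsFoxDerivatives fun i w => d i (fgOf n w) := ⟨hprod, hbasis⟩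
  have hJK := hd.foxJacobian_mul_map_symm lam
  have hKJ := hd.map_symm_mul_foxJacobian lam
  exact ⟨⟨⟨_, _, hJK, hKJ⟩, rfl⟩, hJK, hKJ⟩
end
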